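/- Conversely, if V : ℝ → ℝ is differentiable, bounded, and satisfies V'(t) − V(t)/τ + R(t) = 0 for all t (zero TD error), with R continuous and bounded, then V(t) = ∫_t^∞ exp(−(s−t)/τ) R(s) ds for all t. -/

import Mathlib

/-!
Multiplying by the discount factor, `W s = exp (-(s - t) / τ) * V s` satisfies
`W' s = exp (-(s - t) / τ) * (V' s - V s / τ) = -exp (-(s - t) / τ) * R s` by the zero TD error,
and `W s → 0` as `s → ∞` because `V` is bounded. The fundamental theorem of calculus on `[t, ∞)`
then gives `∫ s in Ioi t, exp (-(s - t) / τ) * R s = W t - 0 = V t`.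
-/

open Real MeasureTheory Filter Topology Set

section DiscountedIntegral

variable {τ : ℝ} (t : ℝ)

lemma integrableOn_Ioi_exp_neg_sub_div (hτ : 0 < τ) :
    IntegrableOn (fun s => exp (-(s - t) / τ)) (Ioi t) := by
  have h := (exp_neg_integrableOn_Ioi t (inv_pos.mpr hτ)).const_mul (exp (t / τ))
  refine IntegrableOn.congr_fun h (fun s _ => ?_) measurableSet_Ioi
  rw [← exp_add]
  ring_nf

lemma integrableOn_Ioi_exp_neg_sub_div_mul {f : ℝ → ℝ} (hτ : 0 < τ)
    (hf : AEStronglyMeasurable f) {M : ℝ} (hM : ∀ s, |f s| ≤ M) :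
    IntegrableOn (fun s => exp (-(s - t) / τ) * f s) (Ioi t) :=
  (integrableOn_Ioi_exp_neg_sub_div t hτ).mul_bdd hf.restrict (ae_of_all _ hM)

lemma tendsto_exp_neg_sub_div_mul_atTop {f : ℝ → ℝ} (hτ : 0 < τ) {C : ℝ}
    (hC : ∀ s, |f s| ≤ C) :
    Tendsto (fun s => exp (-(s - t) / τ) * f s) atTop (𝓝 0) := by
  have hexp : Tendsto (fun s => exp (-(s - t) / τ)) atTop (𝓝 0) :=
    tendsto_exp_atBot.comp <| (tendsto_neg_atTop_atBot.comp
      (tendsto_atTop_add_const_right _ (-t) tendsto_id)).atBot_div_const hτ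
  exact hexp.zero_mul_isBoundedUnder_le ⟨C, eventually_map.mpr (Eventually.of_forall hC)⟩

lemma hasDerivAt_exp_neg_sub_div_mul {f : ℝ → ℝ} {s : ℝ} (hf : DifferentiableAt ℝ f s) :
    HasDerivAt (fun u => exp (-(u - t) / τ) * f u)
      (exp (-(s - t) / τ) * (deriv f s - f s / τ)) s := by
  have hexp : HasDerivAt (fun u => exp (-(u - t) / τ)) (exp (-(s - t) / τ) * (-1 / τ)) s :=
    (((hasDerivAt_id s).sub_const t).neg.div_const τ).exp
  exact (hexp.mul hf.hasDerivAt).congr_deriv (by ring)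

end DiscountedIntegral

/-- Converse: a differentiable bounded V with zero TD error (for continuous
bounded R) equals the discounted integral of future rewards. -/
theorem stmt8 (τ : ℝ) (hτ : 0 < τ) (R : ℝ → ℝ) (hR : Continuous R)
    (hRbdd : ∃ M, ∀ t, |R t| ≤ M)
    (V : ℝ → ℝ) (hVdiff : Differentiable ℝ V) (hVbdd : ∃ C, ∀ t, |V t| ≤ C)
    (hTD : ∀ t, deriv V t - V t / τ + R t = 0) :
    ∀ t, V t = ∫ s in Set.Ici t, Real.exp (-(s - t) / τ) * R s := by
  obtain ⟨M, hM⟩ := hRbdd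
  obtain ⟨C, hC⟩ := hVbdd
  intro t
  have hderiv : ∀ s ∈ Ici t, HasDerivAt (fun u => exp (-(u - t) / τ) * V u)
      (-(exp (-(s - t) / τ) * R s)) s := fun s _ => by
    convert hasDerivAt_exp_neg_sub_div_mul t (hVdiff s) using 1
    rw [eq_neg_add_of_add_eq (hTD s)]
    ring
  have hFTC := integral_Ioi_of_hasDerivAt_of_tendsto' hderiv
    (integrableOn_Ioi_exp_neg_sub_div_mul t hτ hR.aestronglyMeasurable hM).neg
    (tendsto_exp_neg_sub_div_mul_atTop t hτ hC)
  simp only [integral_neg, sub_self, zero_div, neg_zero, exp_zero, one_mul, zero_sub,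
    neg_inj] at hFTC
  rw [integral_Ici_eq_integral_Ioi, hFTC]
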